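/- For all n ≥ 4, P(n, 2) ≥ P(n−2, 2) · C(n, 2), where C(n, 2) is the binomial coefficient. -/

import Mathlib

/-- The Chebyshev distance between two permutations of `{1,…,n}`
(represented as permutations of `Fin n`): `max_i |σ(i) − τ(i)|`. -/
def permDist {n : ℕ} (σ τ : Equiv.Perm (Fin n)) : ℕ :=
  Finset.univ.sup fun i => Nat.dist (σ i : ℕ) (τ i : ℕ)

/-- `P n d` is the maximum cardinality of a set of permutations of `{1,…,n}`
whose pairwise Chebyshev distance is at least `d`. -/
noncomputable def P (n d : ℕ) : ℕ :=
  sSup {k | ∃ A : Finset (Equiv.Perm (Fin n)),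
    (∀ σ ∈ A, ∀ τ ∈ A, σ ≠ τ → d ≤ permDist σ τ) ∧ A.card = k}

/-!
Let `A` be a code of permutations of `{0,…,m-1}` with minimum distance `2`. For each two-element
set `s` of positions in `{0,…,m+1}`, fix a bijection between the other positions and `{0,…,m-1}`;
from `σ ∈ A` build a permutation of `{0,…,m+1}` that is `σ` off `s` and takes the two new values
`m, m+1` on `s`, in the order for which the positions of the three largest values `m-1, m, m+1`
form an odd pattern. If two such permutations `τ, τ'` are at distance at most `1`, then `τ' ∘ τ⁻¹`
moves every value by at most one. Such a permutation either keeps `{m, m+1}` invariant, so that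
`s` agrees and then `σ, σ'` are at distance at most `1`, hence equal; or it fixes `m+1` and swaps
`m-1` and `m`, which changes the parity of the pattern.
-/

open Equiv Finset

lemma permDist_le_iff {n d : ℕ} {σ τ : Perm (Fin n)} :
    permDist σ τ ≤ d ↔ ∀ i, Nat.dist (σ i : ℕ) (τ i : ℕ) ≤ d := by
  simp [permDist]

lemma permDist_self {n : ℕ} (σ : Perm (Fin n)) : permDist σ σ = 0 :=
  Nat.le_zero.mp (permDist_le_iff.mpr fun _ => (Nat.dist_self _).le)

lemma permDist_comm {n : ℕ} (σ τ : Perm (Fin n)) : permDist σ τ = permDist τ σ := by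
  simp only [permDist, Nat.dist_comm]

def IsPermCode (n d : ℕ) (A : Finset (Perm (Fin n))) : Prop :=
  ∀ σ ∈ A, ∀ τ ∈ A, σ ≠ τ → d ≤ permDist σ τ

lemma bddAbove_card_isPermCode (n d : ℕ) :
    BddAbove {k | ∃ A : Finset (Perm (Fin n)), IsPermCode n d A ∧ A.card = k} :=
  ⟨Fintype.card (Perm (Fin n)), by rintro k ⟨A, -, rfl⟩; exact card_le_univ A⟩

lemma IsPermCode.card_le_P {n d : ℕ} {A : Finset (Perm (Fin n))} (hA : IsPermCode n d A) :
    A.card ≤ P n d :=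
  le_csSup (bddAbove_card_isPermCode n d) ⟨A, hA, rfl⟩

lemma exists_isPermCode_card_eq_P (n d : ℕ) :
    ∃ A : Finset (Perm (Fin n)), IsPermCode n d A ∧ A.card = P n d :=
  Nat.sSup_mem (s := {k | ∃ A : Finset (Perm (Fin n)), IsPermCode n d A ∧ A.card = k})
    ⟨0, ∅, by simp [IsPermCode], rfl⟩ (bddAbove_card_isPermCode n d)

def OddTriple {α : Type*} [LinearOrder α] (x y z : α) : Prop :=
  Xor (Xor (y < x) (z < x)) (z < y)

section
variable {α : Type*} [LinearOrder α] {x y z : α}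

lemma oddTriple_swap_left (h : x ≠ y) : OddTriple y x z ↔ ¬OddTriple x y z := by
  unfold OddTriple; rcases h.lt_or_gt with h | h <;> grind

lemma oddTriple_swap_right (h : y ≠ z) : OddTriple x z y ↔ ¬OddTriple x y z := by
  unfold OddTriple; rcases h.lt_or_gt with h | h <;> grind

end

namespace TopInsertion

variable {m : ℕ}

def topVal (m j : ℕ) : Fin (m + 2) := ⟨m + 1 - j, by omega⟩

@[simp] lemma val_topVal (j : ℕ) : (topVal m j : ℕ) = m + 1 - j := rfl

def OddTop (τ : Perm (Fin (m + 2))) : Prop :=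
  OddTriple (τ.symm (topVal m 2)) (τ.symm (topVal m 1)) (τ.symm (topVal m 0))

lemma apply_topVal_of_dist_le_one {ρ : Perm (Fin (m + 2))}
    (hρ : ∀ v, Nat.dist (ρ v : ℕ) (v : ℕ) ≤ 1) (h : ρ (topVal m 1) = topVal m 2) :
    ρ (topVal m 0) = topVal m 0 ∧ ρ (topVal m 2) = topVal m 1 := by
  have hfix : ρ (topVal m 0) = topVal m 0 := by
    have hd := hρ (ρ.symm (topVal m 0))
    have hne : ρ.symm (topVal m 0) ≠ topVal m 1 := by
      rw [Ne, Equiv.symm_apply_eq, h, Fin.ext_iff, val_topVal, val_topVal]; omega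
    have := (ρ.symm (topVal m 0)).isLt
    rw [Eq.comm, ← Equiv.symm_apply_eq]
    simp only [Nat.dist, apply_symm_apply, ne_eq, Fin.ext_iff, val_topVal] at hd hne ⊢; omega
  refine ⟨hfix, ?_⟩
  have hd := hρ (ρ.symm (topVal m 1))
  have hne : ρ.symm (topVal m 1) ≠ topVal m 0 := by
    rw [Ne, Equiv.symm_apply_eq, hfix, Fin.ext_iff, val_topVal, val_topVal]; omega
  -- `m - 1 = m` only for `m = 0`, where `topVal m 2 = topVal m 1`.
  have hself : ρ.symm (topVal m 1) = topVal m 1 → m - 1 = m := by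
    rw [Equiv.symm_apply_eq, h, Fin.ext_iff, val_topVal, val_topVal]; omega
  rw [← Equiv.eq_symm_apply]
  simp only [Nat.dist, apply_symm_apply, ne_eq, Fin.ext_iff, val_topVal] at hd hne hself ⊢; omega

lemma le_apply_of_permDist_le_one {τ τ' : Perm (Fin (m + 2))} (hd : permDist τ τ' ≤ 1)
    (h : OddTop τ) (h' : OddTop τ') {i : Fin (m + 2)} (hi : m ≤ (τ i : ℕ)) :
    m ≤ (τ' i : ℕ) := by
  by_contra! hlt
  have hi' := permDist_le_iff.mp hd i
  simp only [Nat.dist] at hi'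
  set ρ : Perm (Fin (m + 2)) := τ.symm.trans τ'
  have hρd : ∀ v, Nat.dist (ρ v : ℕ) (v : ℕ) ≤ 1 := fun v => by
    simpa [ρ, Nat.dist_comm] using permDist_le_iff.mp hd (τ.symm v)
  have hτi : τ i = topVal m 1 := Fin.ext (by rw [val_topVal]; omega)
  have hρ1 : ρ (topVal m 1) = topVal m 2 := by
    rw [← hτi]
    exact Fin.ext (by rw [trans_apply, symm_apply_apply, val_topVal]; omega)
  obtain ⟨hρ0, hρ2⟩ := apply_topVal_of_dist_le_one hρd hρ1
  have hne : τ.symm (topVal m 2) ≠ τ.symm (topVal m 1) := by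
    rw [Ne, EmbeddingLike.apply_eq_iff_eq, Fin.ext_iff, val_topVal, val_topVal]; omega
  refine (oddTriple_swap_left hne).mp ?_ h
  rwa [OddTop, τ'.symm_apply_eq.mpr hρ0.symm, τ'.symm_apply_eq.mpr hρ1.symm,
    τ'.symm_apply_eq.mpr hρ2.symm] at h'

def swapTop (m : ℕ) : Perm (Fin (m + 2)) := swap (topVal m 1) (topVal m 0)

lemma swapTop_apply_of_lt {v : Fin (m + 2)} (hv : (v : ℕ) < m) : swapTop m v = v :=
  swap_apply_of_ne_of_ne (by rw [Ne, Fin.ext_iff, val_topVal]; omega)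
    (by rw [Ne, Fin.ext_iff, val_topVal]; omega)

lemma le_swapTop_apply_iff (v : Fin (m + 2)) : m ≤ (swapTop m v : ℕ) ↔ m ≤ (v : ℕ) := by
  unfold swapTop
  rcases eq_or_ne v (topVal m 1) with rfl | h1
  · simp
  rcases eq_or_ne v (topVal m 0) with rfl | h0
  · simp
  rw [swap_apply_of_ne_of_ne h1 h0]

lemma oddTop_swapTop_mul (hm : 0 < m) (τ : Perm (Fin (m + 2))) :
    OddTop (swapTop m * τ) ↔ ¬OddTop τ := by
  have h2 : swapTop m (topVal m 2) = topVal m 2 := swapTop_apply_of_lt (by rw [val_topVal]; omega)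
  have hne : τ.symm (topVal m 1) ≠ τ.symm (topVal m 0) := by simp [Fin.ext_iff]
  have hsymm : (swapTop m * τ).symm = (swapTop m).trans τ.symm := by
    ext v; simp [swapTop, Perm.mul_def]
  rw [OddTop, OddTop, hsymm, trans_apply, trans_apply, trans_apply, h2, swapTop, swap_apply_left,
    swap_apply_right]
  exact oddTriple_swap_right hne

open Classical in
noncomputable def orient (τ : Perm (Fin (m + 2))) : Perm (Fin (m + 2)) :=
  if OddTop τ then τ else swapTop m * τ

lemma oddTop_orient (hm : 0 < m) (τ : Perm (Fin (m + 2))) : OddTop (orient τ) := by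
  unfold orient
  split_ifs with h
  · exact h
  · exact (oddTop_swapTop_mul hm τ).mpr h

lemma orient_apply_of_lt {τ : Perm (Fin (m + 2))} {i : Fin (m + 2)} (h : (τ i : ℕ) < m) :
    orient τ i = τ i := by
  unfold orient
  split_ifs
  · rfl
  · exact swapTop_apply_of_lt h

lemma le_orient_apply_iff (τ : Perm (Fin (m + 2))) (i : Fin (m + 2)) :
    m ≤ (orient τ i : ℕ) ↔ m ≤ (τ i : ℕ) := by
  unfold orient
  split_ifs
  · rfl
  · exact le_swapTop_apply_iff (τ i)

def extendLow (σ : Perm (Fin m)) : Perm (Fin (m + 2)) :=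
  permCongr finSumFinEquiv (sumCongr σ 1)

lemma extendLow_castAdd (σ : Perm (Fin m)) (j : Fin m) :
    extendLow σ (Fin.castAdd 2 j) = Fin.castAdd 2 (σ j) := by
  simp [extendLow, permCongr_apply]

lemma le_extendLow_apply_iff (σ : Perm (Fin m)) (v : Fin (m + 2)) :
    m ≤ (extendLow σ v : ℕ) ↔ m ≤ (v : ℕ) := by
  induction v using Fin.addCases with
  | left j => simp only [extendLow_castAdd, Fin.val_castAdd]; omega
  | right t => simp [extendLow, permCongr_apply]

abbrev TwoSet (m : ℕ) : Type := {s : Finset (Fin (m + 2)) // s.card = 2}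

def topSet (m : ℕ) : Finset (Fin (m + 2)) := Ici (topVal m 1)

lemma mem_topSet {v : Fin (m + 2)} : v ∈ topSet m ↔ m ≤ (v : ℕ) := by
  simp [topSet, Fin.le_def]

lemma card_topSet : (topSet m).card = 2 := by
  simp [topSet]

noncomputable def moveToTop (s : TwoSet m) : Perm (Fin (m + 2)) :=
  extendSubtype (s.1.equivOfCardEq (s.2.trans card_topSet.symm))

lemma le_moveToTop_apply_iff (s : TwoSet m) (i : Fin (m + 2)) :
    m ≤ (moveToTop s i : ℕ) ↔ i ∈ s.1 := by
  rw [← mem_topSet]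
  by_cases hi : i ∈ s.1
  · simp only [hi, iff_true]; exact extendSubtype_mem _ i hi
  · simp only [hi, iff_false]; exact extendSubtype_not_mem _ i hi

noncomputable def insertTop (s : TwoSet m) (σ : Perm (Fin m)) :
    Perm (Fin (m + 2)) :=
  orient (extendLow σ * moveToTop s)

variable (s : TwoSet m) (σ : Perm (Fin m))

lemma le_insertTop_apply_iff (i : Fin (m + 2)) : m ≤ (insertTop s σ i : ℕ) ↔ i ∈ s.1 := by
  rw [insertTop, le_orient_apply_iff, Perm.mul_apply, le_extendLow_apply_iff,
    le_moveToTop_apply_iff]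

lemma insertTop_apply_moveToTop_symm (j : Fin m) :
    insertTop s σ ((moveToTop s).symm (Fin.castAdd 2 j)) = Fin.castAdd 2 (σ j) := by
  have h : (extendLow σ * moveToTop s) ((moveToTop s).symm (Fin.castAdd 2 j)) =
      Fin.castAdd 2 (σ j) := by
    rw [Perm.mul_apply, apply_symm_apply, extendLow_castAdd]
  rw [insertTop, orient_apply_of_lt (by rw [h]; exact (σ j).isLt), h]

lemma oddTop_insertTop (hm : 0 < m) : OddTop (insertTop s σ) := oddTop_orient hm _

lemma permDist_le_of_permDist_insertTop_le {σ' : Perm (Fin m)} {d : ℕ}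
    (h : permDist (insertTop s σ) (insertTop s σ') ≤ d) : permDist σ σ' ≤ d := by
  refine permDist_le_iff.mpr fun j => ?_
  simpa [insertTop_apply_moveToTop_symm] using
    permDist_le_iff.mp h ((moveToTop s).symm (Fin.castAdd 2 j))

lemma eq_of_permDist_insertTop_le_one (hm : 0 < m) {s' : TwoSet m}
    {σ' : Perm (Fin m)} (h : permDist (insertTop s σ) (insertTop s' σ') ≤ 1) :
    s = s' ∧ permDist σ σ' ≤ 1 := by
  have hs : s = s' := by
    have h' : permDist (insertTop s' σ') (insertTop s σ) ≤ 1 := permDist_comm _ _ ▸ h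
    ext i
    rw [← le_insertTop_apply_iff s σ, ← le_insertTop_apply_iff s' σ']
    exact ⟨le_apply_of_permDist_le_one h (oddTop_insertTop s σ hm) (oddTop_insertTop s' σ' hm),
      le_apply_of_permDist_le_one h' (oddTop_insertTop s' σ' hm) (oddTop_insertTop s σ hm)⟩
  subst hs
  exact ⟨rfl, permDist_le_of_permDist_insertTop_le s σ h⟩

end TopInsertion

open TopInsertion in
theorem IsPermCode.exists_card_eq_mul_choose {m : ℕ} (hm : 0 < m) {A : Finset (Perm (Fin m))}
    (hA : IsPermCode m 2 A) :
    ∃ B : Finset (Perm (Fin (m + 2))), IsPermCode (m + 2) 2 B ∧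
      B.card = A.card * (m + 2).choose 2 := by
  have key : ∀ p ∈ (univ ×ˢ A : Finset (TwoSet m × Perm (Fin m))),
      ∀ q ∈ (univ ×ˢ A : Finset (TwoSet m × Perm (Fin m))),
      permDist (insertTop p.1 p.2) (insertTop q.1 q.2) ≤ 1 → p = q := by
    rintro ⟨s, σ⟩ hp ⟨s', σ'⟩ hq h
    obtain ⟨rfl, hσ⟩ := eq_of_permDist_insertTop_le_one s σ hm h
    dsimp only at hσ
    by_contra hne
    have := hA σ (mem_product.mp hp).2 σ' (mem_product.mp hq).2 (fun h => hne (by rw [h]))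
    omega
  refine ⟨(univ ×ˢ A).image fun p => insertTop p.1 p.2, ?_, ?_⟩
  · simp only [IsPermCode, mem_image]
    rintro _ ⟨p, hp, rfl⟩ _ ⟨q, hq, rfl⟩ hne
    by_contra! h
    exact hne (by rw [key p hp q hq (by omega)])
  · rw [card_image_of_injOn fun p hp q hq h => key p hp q hq (by rw [h, permDist_self]; omega),
      card_product, card_univ, Fintype.card_finset_len, Fintype.card_fin, mul_comm]

/-- For all `n ≥ 4`, `P(n, 2) ≥ P(n−2, 2) · C(n, 2)`. -/
theorem stmt17 (n : ℕ) (hn : 4 ≤ n) :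
    P (n - 2) 2 * Nat.choose n 2 ≤ P n 2 := by
  obtain ⟨m, rfl⟩ : ∃ m, n = m + 2 := ⟨n - 2, by omega⟩
  obtain ⟨A, hA, hAcard⟩ := exists_isPermCode_card_eq_P m 2
  obtain ⟨B, hB, hBcard⟩ := hA.exists_card_eq_mul_choose (by omega)
  rw [Nat.add_sub_cancel, ← hAcard, ← hBcard]
  exact hB.card_le_P
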